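/- Let 0 < α < 1, λ > 0, and n ≥ 1, and let M be the n×n real matrix with entries M_{ij} = λ α^{max(i,j)} for 1 ≤ i, j ≤ n. Then M is symmetric positive definite. -/

import Mathlib

/-!
For a strictly decreasing nonnegative `f`, the matrix `f (max i j)` on `Fin n` is the
Cholesky-type product `U * D * Uᵀ`, where `U i k = 1` for `i ≤ k` (and `0` otherwise) and
`D` is diagonal with the increments `f k - f (k + 1)`, except for the last entry `f (n - 1)`:
indeed `f m` telescopes into the sum of these increments over `m ≤ k < n`. `U` is unitriangular,
hence invertible, and `D` has positive diagonal, so the product is positive definite. The TC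
kernel is the case `f k = λ α ^ (k + 1)`.
-/

open Finset Matrix

namespace Matrix

variable {ι R : Type*} [Fintype ι] [DecidableEq ι] [LinearOrder ι] [CommRing R]

def upperOnes (ι R : Type*) [LinearOrder ι] [Zero R] [One R] : Matrix ι ι R :=
  of fun i k => if i ≤ k then 1 else 0

theorem det_upperOnes : (upperOnes ι R).det = 1 := by
  rw [det_of_isUpperTriangular]
  · simp [upperOnes]
  · intro i k hki
    exact if_neg (not_le.2 hki)

theorem isUnit_upperOnes : IsUnit (upperOnes ι R) := by
  simp [isUnit_iff_isUnit_det, det_upperOnes]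

end Matrix

def maxKernelWeight (f : ℕ → ℝ) (n k : ℕ) : ℝ :=
  f k - if k + 1 < n then f (k + 1) else 0

theorem maxKernelWeight_pos {f : ℕ → ℝ} (hf : StrictAnti f) (hf0 : ∀ k, 0 ≤ f k) (n k : ℕ) :
    0 < maxKernelWeight f n k := by
  have := hf k.lt_succ_self
  unfold maxKernelWeight
  split_ifs <;> linarith [hf0 (k + 1)]

theorem sum_Ico_maxKernelWeight (f : ℕ → ℝ) {m n : ℕ} (hmn : m < n) :
    ∑ k ∈ Ico m n, maxKernelWeight f n k = f m := by
  set g : ℕ → ℝ := fun k => if k < n then f k else 0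
  have hw : ∀ k ∈ Ico m n, maxKernelWeight f n k = -(g (k + 1) - g k) := by
    intro k hk
    simp [maxKernelWeight, g, (mem_Ico.1 hk).2]
  rw [sum_congr rfl hw, sum_neg_distrib, sum_Ico_sub g hmn.le]
  simp [g, hmn]

theorem upperOnes_mul_diagonal_mul_conjTranspose_apply {n : ℕ} (w : ℕ → ℝ) (i j : Fin n) :
    (upperOnes (Fin n) ℝ * diagonal (fun k : Fin n => w k) * (upperOnes (Fin n) ℝ)ᴴ) i j =
      ∑ k ∈ Ico (max (i : ℕ) j) n, w k := by
  have hterm : ∀ k : Fin n, ((if i ≤ k then 1 else 0) * w k * if j ≤ k then 1 else 0 : ℝ) =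
      if max (i : ℕ) j ≤ (k : ℕ) then w k else 0 := by
    intro k
    simp only [← Fin.coe_max, ← Fin.le_def, max_le_iff]
    split_ifs <;> simp_all
  rw [mul_apply]
  simp only [mul_diagonal, conjTranspose_apply, upperOnes, of_apply, star_trivial, hterm]
  rw [Fin.sum_univ_eq_sum_range (fun k => if max (i : ℕ) j ≤ k then w k else 0), ← sum_filter,
    range_eq_Ico, Ico_filter_le, max_eq_right (Nat.zero_le _)]

theorem posDef_max_of_strictAnti {n : ℕ} {f : ℕ → ℝ} (hf : StrictAnti f) (hf0 : ∀ k, 0 ≤ f k) :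
    (of fun i j : Fin n => f (max (i : ℕ) j)).PosDef := by
  have hfactor : (of fun i j : Fin n => f (max (i : ℕ) j)) = upperOnes (Fin n) ℝ *
      diagonal (fun k : Fin n => maxKernelWeight f n (k : ℕ)) * (upperOnes (Fin n) ℝ)ᴴ := by
    ext i j
    rw [upperOnes_mul_diagonal_mul_conjTranspose_apply, sum_Ico_maxKernelWeight f (max_lt i.2 j.2),
      of_apply]
  rw [hfactor]
  have hD : (diagonal fun k : Fin n => maxKernelWeight f n k).PosDef :=
    posDef_diagonal_iff.2 fun k => maxKernelWeight_pos hf hf0 n k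
  exact hD.mul_mul_conjTranspose_same (vecMul_injective_iff_isUnit.2 isUnit_upperOnes)

theorem stmt_10_general (n : ℕ) (α lam : ℝ) (hα0 : 0 < α) (hα1 : α < 1)
    (hlam : 0 < lam)
    (M : Matrix (Fin n) (Fin n) ℝ)
    (hM : ∀ i j : Fin n, M i j = lam * α ^ (max (i : ℕ) (j : ℕ) + 1)) :
    M.PosDef := by
  have hanti : StrictAnti fun k : ℕ => lam * α ^ (k + 1) :=
    ((pow_right_strictAnti₀ hα0 hα1).comp_strictMono (strictMono_id.add_const 1)).const_mul hlam
  rw [show M = of fun i j : Fin n => lam * α ^ (max (i : ℕ) j + 1) from ext hM]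
  exact posDef_max_of_strictAnti hanti fun k => by positivity

/-- The first-order stable spline kernel with entries `M_{ij} = λ α^{max(i,j)}`
(1-indexed), for `λ > 0` and `0 < α < 1`, is symmetric positive definite. -/
theorem stmt_10 (n : ℕ) (hn : 1 ≤ n) (α lam : ℝ) (hα0 : 0 < α) (hα1 : α < 1)
    (hlam : 0 < lam)
    (M : Matrix (Fin n) (Fin n) ℝ)
    (hM : ∀ i j : Fin n, M i j = lam * α ^ (max (i : ℕ) (j : ℕ) + 1)) :
    M.PosDef :=
  stmt_10_general n α lam hα0 hα1 hlam M hM
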